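/- arXiv:2412.05689 — 3 statements merged into one kernel-verified Lean document; each statement's English description precedes it below -/
import Mathlib

section
/- For all matrices x, g ∈ ℝ^{d×r}, the Frobenius inner product of skew(g xᵀ)x with x(xᵀx − I_r) is zero: ⟨skew(g xᵀ)x, x(xᵀx − I_r)⟩ = 0. In particular, for any differentiable f : ℝ^{d×r} → ℝ, the two components grad f(x) = skew(∇f(x)xᵀ)x and ∇p(x) = x(xᵀx − I_r) of the landing field are orthogonal at every x ∈ ℝ^{d×r}. -/
open Matrix

/-- Frobenius inner product `⟨A, B⟩ = Tr(A Bᵀ)`. -/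
noncomputable def finner {m n : Type*} [Fintype m] [Fintype n]
    (A B : Matrix m n ℝ) : ℝ := (A * Bᵀ).trace

/-- Skew part of a square matrix: `skew(A) = (A - Aᵀ)/2`. -/
noncomputable def mskew {m : Type*} (A : Matrix m m ℝ) : Matrix m m ℝ :=
  ((1 : ℝ) / 2) • (A - Aᵀ)

lemma skew_symm_trace {m : Type*} [Fintype m] [DecidableEq m]
    (A B : Matrix m m ℝ) (hA : Aᵀ = -A) (hB : Bᵀ = B) : (A * B).trace = 0 := by
  have h : (A * B).trace = -(A * B).trace := by
    conv_lhs => rw [← Matrix.trace_transpose, Matrix.transpose_mul, hA, hB,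
      Matrix.mul_neg, Matrix.trace_neg, Matrix.trace_mul_comm]
  linarith

/-- For all `x, g ∈ ℝ^{d×r}`, `⟨skew(g xᵀ) x, x (xᵀ x - I_r)⟩ = 0`.  In particular, for any
differentiable `f`, the relative gradient `grad f(x) = skew(∇f(x) xᵀ) x` and the penalty
gradient `∇p(x) = x (xᵀ x - 1)` are orthogonal at every `x`. -/
theorem landing_components_orthogonal (d r : ℕ) (x g : Matrix (Fin d) (Fin r) ℝ) :
    finner (mskew (g * xᵀ) * x) (x * (xᵀ * x - 1)) = 0 := by
  unfold finner
  have key : (mskew (g * xᵀ) * x * (x * (xᵀ * x - 1))ᵀ).trace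
      = (mskew (g * xᵀ) * (x * (xᵀ * x - 1)ᵀ * xᵀ)).trace := by
    rw [Matrix.transpose_mul]; rw [Matrix.mul_assoc, Matrix.mul_assoc]
  rw [key]
  apply skew_symm_trace
  · unfold mskew
    rw [Matrix.transpose_smul, Matrix.transpose_sub, Matrix.transpose_transpose]
    module
  · rw [Matrix.transpose_mul, Matrix.transpose_mul, Matrix.transpose_transpose,
      Matrix.transpose_transpose]
    have : (xᵀ * x - 1)ᵀ = xᵀ * x - 1 := by
      rw [Matrix.transpose_sub, Matrix.transpose_mul, Matrix.transpose_transpose,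
        Matrix.transpose_one]
    rw [this, Matrix.mul_assoc]
end

section
/- Let f : ℝ^{d×r} → ℝ be differentiable and λ > 0, and define the landing field Λ(x) = skew(∇f(x)xᵀ)x + λ x(xᵀx − I_r). Then for every x ∈ ℝ^{d×r} one has the Pythagorean identity ‖Λ(x)‖²_F = ‖skew(∇f(x)xᵀ)x‖²_F + λ²‖x(xᵀx − I_r)‖²_F; consequently Λ(x) = 0 if and only if skew(∇f(x)xᵀ)x = 0 and x(xᵀx − I_r) = 0. -/
open Matrix

attribute [local instance] Matrix.frobeniusNormedAddCommGroup Matrix.frobeniusNormedSpace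

lemma normsq {m n : Type*} [Fintype m] [Fintype n] (A : Matrix m n ℝ) :
    ‖A‖ ^ 2 = ∑ i, ∑ j, (A i j) ^ 2 := by
  rw [Matrix.frobenius_norm_def, ← Real.rpow_natCast _ 2, ← Real.rpow_mul (by positivity)]
  norm_num

lemma pyth {m n : Type*} [Fintype m] [Fintype n] (A B : Matrix m n ℝ)
    (h : (A * Bᵀ).trace = 0) : ‖A + B‖ ^ 2 = ‖A‖ ^ 2 + ‖B‖ ^ 2 := by
  have h' : ∑ i, ∑ j, A i j * B i j = 0 := by
    simpa [Matrix.trace, Matrix.mul_apply, Matrix.diag] using h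
  simp only [normsq, Matrix.add_apply]
  have : ∀ i, ∑ j, (A i j + B i j)^2
      = (∑ j, (A i j)^2) + (∑ j, (B i j)^2) + 2 * ∑ j, A i j * B i j := by
    intro i; rw [← Finset.sum_add_distrib, Finset.mul_sum, ← Finset.sum_add_distrib]
    congr 1; ext j; ring
  rw [Finset.sum_congr rfl fun i _ => this i, Finset.sum_add_distrib,
    Finset.sum_add_distrib, ← Finset.mul_sum, h']
  ring

lemma orth {d r : ℕ} (S : Matrix (Fin d) (Fin d) ℝ) (hS : Sᵀ = -S)
    (N : Matrix (Fin r) (Fin r) ℝ) (hN : Nᵀ = N) (x : Matrix (Fin d) (Fin r) ℝ) :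
    ((S * x) * (x * N)ᵀ).trace = 0 := by
  have e : (S * x) * (x * N)ᵀ = S * (x * N * xᵀ) := by
    rw [Matrix.transpose_mul, hN]; simp [Matrix.mul_assoc]
  have hM : (x * N * xᵀ)ᵀ = x * N * xᵀ := by
    simp [Matrix.transpose_mul, hN, Matrix.mul_assoc]
  have : (S * (x * N * xᵀ)).trace = -(S * (x * N * xᵀ)).trace := by
    conv_lhs => rw [← Matrix.trace_transpose, Matrix.transpose_mul, hM, hS,
      Matrix.trace_mul_comm]
    simp
  rw [e]; linarith

/-- Pythagorean identity for the landing field `Λ(x) = skew(∇f(x)xᵀ)x + λ x(xᵀx - I_r)`: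
`‖Λ(x)‖² = ‖skew(∇f(x)xᵀ)x‖² + λ²‖x(xᵀx - I_r)‖²`; consequently `Λ(x) = 0` iff both
components vanish. -/
theorem landing_field_pythagoras (d r : ℕ) (f : Matrix (Fin d) (Fin r) ℝ → ℝ)
    (gradf : Matrix (Fin d) (Fin r) ℝ → Matrix (Fin d) (Fin r) ℝ)
    (hf : Differentiable ℝ f)
    (hgrad : ∀ x v : Matrix (Fin d) (Fin r) ℝ, fderiv ℝ f x v = finner (gradf x) v)
    (lam : ℝ) (hlam : 0 < lam)
    (Λ : Matrix (Fin d) (Fin r) ℝ → Matrix (Fin d) (Fin r) ℝ)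
    (hΛ : ∀ x, Λ x = mskew (gradf x * xᵀ) * x + lam • (x * (xᵀ * x - 1))) :
    ∀ x : Matrix (Fin d) (Fin r) ℝ,
      ‖Λ x‖ ^ 2 = ‖mskew (gradf x * xᵀ) * x‖ ^ 2 + lam ^ 2 * ‖x * (xᵀ * x - 1)‖ ^ 2 ∧
      (Λ x = 0 ↔ mskew (gradf x * xᵀ) * x = 0 ∧ x * (xᵀ * x - 1) = 0) := by
  intro x
  set S := mskew (gradf x * xᵀ) with hSdef
  set N : Matrix (Fin r) (Fin r) ℝ := xᵀ * x - 1 with hNdef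
  have hS : Sᵀ = -S := by
    simp [hSdef, mskew, Matrix.transpose_smul, Matrix.transpose_sub, smul_sub]
  have hN : Nᵀ = N := by
    simp [hNdef, Matrix.transpose_sub, Matrix.transpose_mul]
  have horth : ((S * x) * (lam • (x * N))ᵀ).trace = 0 := by
    rw [Matrix.transpose_smul, Matrix.mul_smul, Matrix.trace_smul, orth S hS N hN x,
      smul_zero]
  have hpy : ‖Λ x‖ ^ 2 = ‖S * x‖ ^ 2 + lam ^ 2 * ‖x * N‖ ^ 2 := by
    rw [hΛ x, pyth _ _ horth, norm_smul, Real.norm_eq_abs, mul_pow, sq_abs]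
  refine ⟨hpy, ?_, ?_⟩
  · intro h0
    have h : (0:ℝ) = ‖S * x‖ ^ 2 + lam ^ 2 * ‖x * N‖ ^ 2 := by
      rw [← hpy, h0, norm_zero]; ring
    have h1 : ‖S * x‖ ^ 2 = 0 ∧ lam ^ 2 * ‖x * N‖ ^ 2 = 0 := by
      constructor <;> nlinarith [sq_nonneg ‖S * x‖, sq_nonneg ‖x * N‖, sq_nonneg lam,
        mul_pos hlam hlam, sq_nonneg (lam * ‖x * N‖)]
    obtain ⟨h1, h2⟩ := h1
    have hl2 : lam ^ 2 ≠ 0 := by positivity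
    constructor
    · exact norm_eq_zero.mp (pow_eq_zero_iff (by norm_num) |>.mp h1)
    · have : ‖x * N‖ ^ 2 = 0 := by
        exact (mul_eq_zero.mp h2).resolve_left hl2
      exact norm_eq_zero.mp (pow_eq_zero_iff (by norm_num) |>.mp this)
  · rintro ⟨h1, h2⟩
    rw [hΛ x, h1, h2, smul_zero, add_zero]
end

section
/- Let ε ∈ (0, 3/4). For every x ∈ St(d,r)^ε and every v ∈ ℝ^{d×r}, the directional Hessian of the penalty p(x) = ¼‖xᵀx − I_r‖²_F is bounded as ‖v(xᵀx − I_r) + x(vᵀx + xᵀv)‖_F ≤ (2 + 3ε)‖v‖_F; that is, the Hessian of p has operator norm at most 2 + 3ε at every point of the safety region. -/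
open Matrix

attribute [local instance] Matrix.frobeniusNormedAddCommGroup Matrix.frobeniusNormedSpace

section aux

variable {a b : Type*} [Fintype a] [Fintype b]

private lemma frob_sq (A : Matrix a b ℝ) : ‖A‖ ^ 2 = ∑ i, ∑ j, (A i j) ^ 2 := by
  have hr : ∀ t : ℝ, t ^ (2:ℝ) = t ^ (2:ℕ) := fun t => by
    rw [show (2:ℝ) = ((2:ℕ):ℝ) by norm_num, Real.rpow_natCast]
  rw [Matrix.frobenius_norm_def]
  simp_rw [hr]
  have h : (0:ℝ) ≤ ∑ i, ∑ j, ‖A i j‖ ^ (2:ℕ) := by positivity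
  rw [← Real.sqrt_eq_rpow, Real.sq_sqrt h]
  simp [Real.norm_eq_abs, sq_abs]

private lemma frob_sqrt (A : Matrix a b ℝ) : ‖A‖ = Real.sqrt (∑ i, ∑ j, (A i j) ^ 2) := by
  rw [← frob_sq, Real.sqrt_sq (norm_nonneg _)]

private lemma frob_cs (A B : Matrix a b ℝ) : ∑ i, ∑ j, A i j * B i j ≤ ‖A‖ * ‖B‖ := by
  have h := Real.sum_mul_le_sqrt_mul_sqrt (Finset.univ : Finset (a × b))
      (fun ij => A ij.1 ij.2) (fun ij => B ij.1 ij.2)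
  rw [frob_sqrt A, frob_sqrt B]
  simp_rw [← Finset.sum_product', Finset.univ_product_univ]
  simpa using h

private lemma trace_form (A B : Matrix a b ℝ) :
    trace (Aᵀ * B) = ∑ i, ∑ j, A i j * B i j := by
  simp only [Matrix.trace, Matrix.diag, Matrix.mul_apply, Matrix.transpose_apply]
  rw [Finset.sum_comm]

end aux

section keylemmas

variable {d r : ℕ} {ε : ℝ}

private lemma key1 (x : Matrix (Fin d) (Fin r) ℝ) (hx : ‖xᵀ * x - 1‖ ≤ ε) {n : ℕ}
    (C : Matrix (Fin r) (Fin n) ℝ) : ‖x * C‖ ^ 2 ≤ (1 + ε) * ‖C‖ ^ 2 := by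
  have key : ∑ i, ∑ j, ((x * C) i j) ^ 2
      = ∑ k, ∑ l, (xᵀ * x) k l * (C * Cᵀ) k l := by
    have h1 : ∑ i, ∑ j, ((x * C) i j) ^ 2 = trace ((x*C)ᵀ * (x*C)) := by
      rw [trace_form]; simp_rw [pow_two]
    have h2 : (x*C)ᵀ * (x*C) = Cᵀ * ((xᵀ * x) * C) := by
      rw [Matrix.transpose_mul]; simp [Matrix.mul_assoc]
    have h3 : trace (Cᵀ * ((xᵀ * x) * C)) = trace (((xᵀ*x) * C) * Cᵀ) :=
      Matrix.trace_mul_comm _ _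
    have h4 : ((xᵀ*x) * C) * Cᵀ = ((xᵀ*x)ᵀ)ᵀ * (C * Cᵀ) := by
      rw [Matrix.transpose_transpose, Matrix.mul_assoc]
    have hsym : ∀ k l, (xᵀ*x) l k = (xᵀ*x) k l := fun k l => by
      simp [Matrix.mul_apply, Matrix.transpose_apply, mul_comm]
    rw [h1, h2, h3, h4, trace_form]
    refine Finset.sum_congr rfl fun k _ => Finset.sum_congr rfl fun l _ => ?_
    rw [Matrix.transpose_apply, hsym]
  have hE : ∀ k l, (xᵀ*x) k l
      = ((xᵀ*x - 1 : Matrix (Fin r) (Fin r) ℝ) k l) + (1 : Matrix (Fin r) (Fin r) ℝ) k l := fun k l => by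
    simp [Matrix.sub_apply]
  have split : ∑ k, ∑ l, (xᵀ * x) k l * (C * Cᵀ) k l
      = (∑ k, ∑ l, ((xᵀ * x - 1 : Matrix (Fin r) (Fin r) ℝ) k l) * (C * Cᵀ) k l) + ‖C‖ ^ 2 := by
    simp_rw [hE, add_mul, Finset.sum_add_distrib]
    congr 1
    have h5 : ∀ k, ∑ l, (1 : Matrix (Fin r) (Fin r) ℝ) k l * (C * Cᵀ) k l
        = (C * Cᵀ) k k := fun k => by
      simp [Matrix.one_apply]
    simp_rw [h5]
    rw [frob_sq]
    refine Finset.sum_congr rfl fun k _ => ?_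
    simp [Matrix.mul_apply, pow_two]
  have cs : ∑ k, ∑ l, ((xᵀ * x - 1 : Matrix (Fin r) (Fin r) ℝ) k l) * (C * Cᵀ) k l ≤ ε * ‖C‖ ^ 2 := by
    calc ∑ k, ∑ l, ((xᵀ * x - 1 : Matrix (Fin r) (Fin r) ℝ) k l) * (C * Cᵀ) k l
        ≤ ‖xᵀ * x - 1‖ * ‖C * Cᵀ‖ := frob_cs _ _
      _ ≤ ε * (‖C‖ * ‖Cᵀ‖) :=
        mul_le_mul hx (Matrix.frobenius_norm_mul C Cᵀ) (norm_nonneg _)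
          ((norm_nonneg _).trans hx)
      _ = ε * ‖C‖ ^ 2 := by rw [Matrix.frobenius_norm_transpose]; ring
  rw [frob_sq, key, split]
  linarith

private lemma key1' (x : Matrix (Fin d) (Fin r) ℝ) (hx : ‖xᵀ * x - 1‖ ≤ ε) {n : ℕ}
    (C : Matrix (Fin r) (Fin n) ℝ) : ‖x * C‖ ≤ Real.sqrt (1 + ε) * ‖C‖ := by
  have hε0 : (0:ℝ) ≤ ε := (norm_nonneg _).trans hx
  have h0 : (0:ℝ) ≤ 1 + ε := by linarith
  rw [← Real.sqrt_sq (norm_nonneg (x * C))]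
  refine (Real.sqrt_le_sqrt (key1 x hx C)).trans ?_
  rw [Real.sqrt_mul h0, Real.sqrt_sq (norm_nonneg C)]

private lemma key2 (x : Matrix (Fin d) (Fin r) ℝ) (hx : ‖xᵀ * x - 1‖ ≤ ε) {n : ℕ}
    (C : Matrix (Fin d) (Fin n) ℝ) : ‖xᵀ * C‖ ≤ Real.sqrt (1 + ε) * ‖C‖ := by
  set W := xᵀ * C with hW
  have id1 : ‖W‖ ^ 2 = ∑ i, ∑ j, (x * W) i j * C i j := by
    have e1 : Wᵀ * W = Cᵀ * (x * W) := by
      rw [hW, Matrix.transpose_mul, Matrix.transpose_transpose, Matrix.mul_assoc]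
    rw [frob_sq]
    calc ∑ i, ∑ j, (W i j) ^ 2 = trace (Wᵀ * W) := by rw [trace_form]; simp_rw [pow_two]
      _ = trace (Cᵀ * (x * W)) := by rw [e1]
      _ = ∑ i, ∑ j, C i j * (x * W) i j := trace_form _ _
      _ = ∑ i, ∑ j, (x * W) i j * C i j := by simp_rw [mul_comm]
  have h2 : ‖W‖ ^ 2 ≤ Real.sqrt (1 + ε) * ‖W‖ * ‖C‖ := by
    rw [id1]
    calc ∑ i, ∑ j, (x * W) i j * C i j ≤ ‖x * W‖ * ‖C‖ := frob_cs _ _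
      _ ≤ Real.sqrt (1 + ε) * ‖W‖ * ‖C‖ :=
        mul_le_mul_of_nonneg_right (key1' x hx W) (norm_nonneg _)
  rcases eq_or_lt_of_le (norm_nonneg W) with h | h
  · rw [← h]; positivity
  · nlinarith [h2, h]

end keylemmas

/-- Hessian bound for the penalty `p(x) = ¼‖xᵀx - I_r‖²_F` on the safety region: for
`x ∈ St(d,r)^ε` and any direction `v`,
`‖v(xᵀx - I_r) + x(vᵀx + xᵀv)‖_F ≤ (2 + 3ε)‖v‖_F`. -/
theorem penalty_hessian_bound (d r : ℕ) (ε : ℝ) (hε : 0 < ε ∧ ε < 3 / 4)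
    (x : Matrix (Fin d) (Fin r) ℝ) (hx : ‖xᵀ * x - 1‖ ≤ ε) :
    ∀ v : Matrix (Fin d) (Fin r) ℝ,
      ‖v * (xᵀ * x - 1) + x * (vᵀ * x + xᵀ * v)‖ ≤ (2 + 3 * ε) * ‖v‖ := by
  intro v
  have hε0 : (0:ℝ) ≤ ε := hε.1.le
  have h1 : ‖v * (xᵀ * x - 1)‖ ≤ ‖v‖ * ε :=
    (Matrix.frobenius_norm_mul _ _).trans (mul_le_mul_of_nonneg_left hx (norm_nonneg _))
  have hxv : ‖xᵀ * v‖ ≤ Real.sqrt (1 + ε) * ‖v‖ := key2 x hx v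
  have hvx : ‖vᵀ * x‖ = ‖xᵀ * v‖ := by
    rw [← Matrix.frobenius_norm_transpose (vᵀ * x), Matrix.transpose_mul,
      Matrix.transpose_transpose]
  have h2 : ‖x * (vᵀ * x + xᵀ * v)‖ ≤ Real.sqrt (1 + ε) * ‖vᵀ * x + xᵀ * v‖ := key1' x hx _
  have h3 : ‖vᵀ * x + xᵀ * v‖ ≤ 2 * (Real.sqrt (1 + ε) * ‖v‖) := by
    calc ‖vᵀ * x + xᵀ * v‖ ≤ ‖vᵀ * x‖ + ‖xᵀ * v‖ := norm_add_le _ _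
      _ ≤ 2 * (Real.sqrt (1 + ε) * ‖v‖) := by rw [hvx]; linarith
  have hs : Real.sqrt (1 + ε) * Real.sqrt (1 + ε) = 1 + ε :=
    Real.mul_self_sqrt (by linarith)
  have h4 : ‖x * (vᵀ * x + xᵀ * v)‖ ≤ (2 + 2 * ε) * ‖v‖ := by
    calc ‖x * (vᵀ * x + xᵀ * v)‖
        ≤ Real.sqrt (1 + ε) * (2 * (Real.sqrt (1 + ε) * ‖v‖)) :=
          h2.trans (mul_le_mul_of_nonneg_left h3 (Real.sqrt_nonneg _))
      _ = 2 * (Real.sqrt (1 + ε) * Real.sqrt (1 + ε)) * ‖v‖ := by ring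
      _ = (2 + 2 * ε) * ‖v‖ := by rw [hs]; ring
  calc ‖v * (xᵀ * x - 1) + x * (vᵀ * x + xᵀ * v)‖
      ≤ ‖v * (xᵀ * x - 1)‖ + ‖x * (vᵀ * x + xᵀ * v)‖ := norm_add_le _ _
    _ ≤ ‖v‖ * ε + (2 + 2 * ε) * ‖v‖ := add_le_add h1 h4
    _ = (2 + 3 * ε) * ‖v‖ := by ring
end
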